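/- Let v(a) ∈ ℝ² be a unit vector, and let η : I → ℝ² be a family of vectors of the form η(s) = v(s) - c(s)·v(a) with ‖v(s)‖ = 1 and |c(s)| ≤ 1, all lying on a common line 𝓛 through the origin that is not perpendicular to v(a) and not parallel to v(a). If the vectors v(s), s ∈ I, fill out a closed half of the unit circle (i.e., for every unit vector u with ⟨u, v(a)^⊥⟩ ≥ 0 there is s with v(s) = u), then there exists s ∈ I with dist(v(s), 𝓛) > 1, contradicting dist(v(s), η(s)) = |c(s)| ≤ 1. Hence 𝓛 must be perpendicular to v(a). -/

import Mathlib

/-!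
Let `n` be the unit normal of the line `ℝ ∙ d`. Pairing `u - c • a ∈ ℝ ∙ d` with `n` gives
`⟪u, n⟫ = c ⟪a, n⟫`, so `|⟪u, n⟫| ≤ |⟪a, n⟫|` whenever `|c| ≤ 1`. One of `±n` lies in the
closed half circle, and for it the left side is `1`; hence `|⟪a, n⟫| ≥ 1 = ‖a‖`, which by
`⟪a, d/‖d‖⟫² + ⟪a, n⟫² = ‖a‖²` forces `⟪a, d⟫ = 0`.
-/

open RealInnerProductSpace Module

variable {E : Type*} [NormedAddCommGroup E] [InnerProductSpace ℝ E]

theorem exists_norm_eq_one_inner_nonneg_abs_inner_eq_norm {n : E} (hn : n ≠ 0) (w : E) :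
    ∃ u : E, ‖u‖ = 1 ∧ 0 ≤ ⟪u, w⟫ ∧ |⟪u, n⟫| = ‖n‖ := by
  have hunit : ‖‖n‖⁻¹ • n‖ = 1 := norm_smul_inv_norm hn
  have habs : |⟪‖n‖⁻¹ • n, n⟫| = ‖n‖ := by
    rw [real_inner_smul_left, real_inner_self_eq_norm_sq, abs_of_nonneg (by positivity)]
    field_simp
  rcases le_total 0 ⟪‖n‖⁻¹ • n, w⟫ with h | h
  · exact ⟨_, hunit, h, habs⟩
  · exact ⟨-(‖n‖⁻¹ • n), by rwa [norm_neg], by rw [inner_neg_left]; linarith,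
      by rwa [inner_neg_left, abs_neg]⟩

theorem abs_inner_le_of_sub_smul_mem_span_singleton {u a d n : E} {c : ℝ}
    (h : u - c • a ∈ Submodule.span ℝ {d}) (hdn : ⟪d, n⟫ = 0) (hc : |c| ≤ 1) :
    |⟪u, n⟫| ≤ |⟪a, n⟫| := by
  obtain ⟨t, ht⟩ := Submodule.mem_span_singleton.mp h
  have hun : ⟪u, n⟫ = c * ⟪a, n⟫ := by
    have htn := congrArg (⟪·, n⟫) ht
    simp only [real_inner_smul_left, inner_sub_left, hdn, mul_zero] at htn
    linarith
  rw [hun, abs_mul]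
  exact mul_le_of_le_one_left (abs_nonneg _) hc

namespace Orientation

variable [Fact (finrank ℝ E = 2)] (o : Orientation ℝ E (Fin 2))

theorem inner_eq_zero_of_norm_le_abs_inner_rightAngleRotation {a d : E} (ha : ‖a‖ = 1)
    (h : ‖d‖ ≤ |⟪a, o.rightAngleRotation d⟫|) : ⟪d, a⟫ = 0 := by
  have hsq := o.inner_sq_add_areaForm_sq a d
  rw [o.inner_rightAngleRotation_right, abs_neg] at h
  have : ‖d‖ ^ 2 ≤ o.areaForm a d ^ 2 := by
    rw [← sq_abs (o.areaForm a d)]; exact pow_le_pow_left₀ (norm_nonneg _) h 2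
  rw [ha, one_pow, one_mul] at hsq
  rw [real_inner_comm]
  nlinarith [sq_nonneg ⟪a, d⟫]

end Orientation

theorem inner_eq_zero_of_forall_sub_smul_mem_span_singleton [Fact (finrank ℝ E = 2)]
    {a w d : E} (ha : ‖a‖ = 1)
    (h : ∀ u : E, ‖u‖ = 1 → 0 ≤ ⟪u, w⟫ → ∃ c : ℝ, |c| ≤ 1 ∧ u - c • a ∈ Submodule.span ℝ {d}) :
    ⟪d, a⟫ = 0 := by
  rcases eq_or_ne d 0 with rfl | hd
  · exact inner_zero_left a
  have := FiniteDimensional.of_fact_finrank_eq_two (K := ℝ) (V := E)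
  let o : Orientation ℝ E (Fin 2) := (finBasisOfFinrankEq ℝ E Fact.out).orientation
  have hJd : o.rightAngleRotation d ≠ 0 := by simpa using hd
  obtain ⟨u, hu, huw, hun⟩ := exists_norm_eq_one_inner_nonneg_abs_inner_eq_norm hJd w
  obtain ⟨c, hc, hmem⟩ := h u hu huw
  refine o.inner_eq_zero_of_norm_le_abs_inner_rightAngleRotation ha ?_
  calc ‖d‖ = |⟪u, o.rightAngleRotation d⟫| := by rw [hun, LinearIsometryEquiv.norm_map]
    _ ≤ _ := abs_inner_le_of_sub_smul_mem_span_singleton hmem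
        (by rw [real_inner_comm]; exact o.inner_rightAngleRotation_self d) hc

theorem stmt_9_general (I : Set ℝ) (va wa : EuclideanSpace ℝ (Fin 2))
    (hva : ‖va‖ = 1)
    (d : EuclideanSpace ℝ (Fin 2))
    (v : ℝ → EuclideanSpace ℝ (Fin 2)) (c : ℝ → ℝ)
    (hc : ∀ s ∈ I, |c s| ≤ 1)
    (hη : ∀ s ∈ I, v s - c s • va ∈ Submodule.span ℝ ({d} : Set (EuclideanSpace ℝ (Fin 2))))
    (hfill : ∀ u : EuclideanSpace ℝ (Fin 2), ‖u‖ = 1 → 0 ≤ ⟪u, wa⟫ →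
      ∃ s ∈ I, v s = u) :
    ⟪d, va⟫ = 0 := by
  have : Fact (finrank ℝ (EuclideanSpace ℝ (Fin 2)) = 2) := ⟨finrank_euclideanSpace_fin⟩
  refine inner_eq_zero_of_forall_sub_smul_mem_span_singleton (w := wa) hva fun u hu huw => ?_
  obtain ⟨s, hs, rfl⟩ := hfill u hu huw
  exact ⟨c s, hc s hs, hη s hs⟩

/-- if the unit vectors `v s` fill a closed half of the unit circle and
each `η s = v s - c s • v(a)` (with `|c s| ≤ 1`) lies on a common line `𝓛 = span{d}`
through the origin not parallel to the unit vector `v(a)`, then `𝓛` must be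
perpendicular to `v(a)`. -/
theorem stmt_9 (I : Set ℝ) (va wa : EuclideanSpace ℝ (Fin 2))
    (hva : ‖va‖ = 1) (hwa : ‖wa‖ = 1) (hperp : ⟪va, wa⟫ = 0)
    (d : EuclideanSpace ℝ (Fin 2)) (hd : d ≠ 0)
    (hnotpar : ¬ ∃ c : ℝ, d = c • va)
    (v : ℝ → EuclideanSpace ℝ (Fin 2)) (c : ℝ → ℝ)
    (hv : ∀ s ∈ I, ‖v s‖ = 1) (hc : ∀ s ∈ I, |c s| ≤ 1)
    (hη : ∀ s ∈ I, v s - c s • va ∈ Submodule.span ℝ ({d} : Set (EuclideanSpace ℝ (Fin 2))))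
    (hfill : ∀ u : EuclideanSpace ℝ (Fin 2), ‖u‖ = 1 → 0 ≤ ⟪u, wa⟫ →
      ∃ s ∈ I, v s = u) :
    ⟪d, va⟫ = 0 :=
  stmt_9_general I va wa hva d v c hc hη hfill
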